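/- arXiv:1602.07720 — 2 statements merged into one kernel-verified Lean document; each statement's English description precedes it below -/
import Mathlib

section
/- A/B testing lazy reserves interpolates linearly: let n bidders have i.i.d. bids from an atomless regular distribution on [0, ∞) with CDF F, density f, and Myerson reserve ρ ≥ 0 satisfying φ(ρ) = 0 where φ(v) = v − (1 − F(v))/f(v). For 0 ≤ k ≤ n, let r^k be the reserve vector equal to ρ on the first k coordinates and 0 elsewhere, and RevL(k) = E[RevL(b, r^k)] under the product measure. Then for every k, RevL(k) = (k/n)·RevL(n) + (1 − k/n)·RevL(0). -/
/-! Ties have probability zero because the bid distribution is atomless, and on distinct bids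
the lazy revenue depends on the reserve vector only through the reserve of the highest bidder.
Relabelling the bidders preserves the product measure and, for a constant reserve `c`, the
revenue, while it moves the winner; so each bidder `i` contributes the same amount `share c` on
the event that `i` wins, and `E[RevL(b, r)] = ∑ i, share (r i)` for every reserve vector `r`.
Hence `RevL(k) = k share ρ + (n + 1 - k) share 0`, `RevL(n + 1) = (n + 1) share ρ` and
`RevL(0) = (n + 1) share 0`. -/

open MeasureTheory Finset
open scoped Classical ENNReal

noncomputable def lazyWinner {n : ℕ} (b : Fin (n + 1) → ℝ) : Fin (n + 1) :=
  (Finset.univ.filter fun i => ∀ j, b j ≤ b i).min' (by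
    obtain ⟨i, -, hi⟩ := Finset.exists_max_image Finset.univ b ⟨0, Finset.mem_univ 0⟩
    exact ⟨i, Finset.mem_filter.mpr ⟨Finset.mem_univ i, fun j => hi j (Finset.mem_univ j)⟩⟩)

noncomputable def secondMax {n : ℕ} (b : Fin (n + 1) → ℝ) : ℝ :=
  (Finset.univ.erase (lazyWinner b)).fold max 0 b

/-- Revenue of the second price auction with lazy reserves. -/
noncomputable def lazyRev {n : ℕ} (b r : Fin (n + 1) → ℝ) : ℝ :=
  if r (lazyWinner b) ≤ b (lazyWinner b) then max (r (lazyWinner b)) (secondMax b) else 0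

/-- The least-index bidder among those meeting their reserve attaining the highest bid. -/
noncomputable def eagerWinner {n : ℕ} (b r : Fin (n + 1) → ℝ)
    (hS : (Finset.univ.filter fun i => r i ≤ b i).Nonempty) : Fin (n + 1) :=
  ((Finset.univ.filter fun i => r i ≤ b i).filter
      fun i => ∀ k ∈ Finset.univ.filter (fun i => r i ≤ b i), b k ≤ b i).min' (by
    obtain ⟨i, hi, hmax⟩ := Finset.exists_max_image _ b hS
    exact ⟨i, Finset.mem_filter.mpr ⟨hi, hmax⟩⟩)

/-- Revenue of the second price auction with eager reserves. -/
noncomputable def eagerRev {n : ℕ} (b r : Fin (n + 1) → ℝ) : ℝ :=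
  if hS : (Finset.univ.filter fun i => r i ≤ b i).Nonempty then
    max (r (eagerWinner b r hS))
      (((Finset.univ.filter fun i => r i ≤ b i).erase (eagerWinner b r hS)).fold max 0 b)
  else 0

section Winner

variable {n : ℕ}

theorem le_lazyWinner (b : Fin (n + 1) → ℝ) (j : Fin (n + 1)) : b j ≤ b (lazyWinner b) :=
  (Finset.mem_filter.1
    (Finset.min'_mem _ _ : lazyWinner b ∈ Finset.univ.filter fun i => ∀ j, b j ≤ b i)).2 j

theorem lazyWinner_eq_iff {b : Fin (n + 1) → ℝ} {i : Fin (n + 1)} :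
    lazyWinner b = i ↔ (∀ j, b j ≤ b i) ∧ ∀ i', (∀ j, b j ≤ b i') → i ≤ i' := by
  constructor
  · rintro rfl
    exact ⟨le_lazyWinner b, fun i' hi' => Finset.min'_le _ _ (by simpa using hi')⟩
  · rintro ⟨hmax, hleast⟩
    exact le_antisymm (Finset.min'_le _ _ (by simpa using hmax)) (hleast _ (le_lazyWinner b))

theorem lazyWinner_eq_of_injective {b : Fin (n + 1) → ℝ} (hb : Function.Injective b)
    {i : Fin (n + 1)} (hi : ∀ j, b j ≤ b i) : lazyWinner b = i :=
  hb (le_antisymm (hi _) (le_lazyWinner b i))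

theorem lazyWinner_comp_perm {b : Fin (n + 1) → ℝ} (hb : Function.Injective b)
    (σ : Equiv.Perm (Fin (n + 1))) : lazyWinner (b ∘ σ) = σ.symm (lazyWinner b) :=
  lazyWinner_eq_of_injective (hb.comp σ.injective) fun j => by
    simpa using le_lazyWinner b (σ j)

theorem secondMax_comp_perm {b : Fin (n + 1) → ℝ} (hb : Function.Injective b)
    (σ : Equiv.Perm (Fin (n + 1))) : secondMax (b ∘ σ) = secondMax b := by
  rw [secondMax, secondMax, lazyWinner_comp_perm hb σ,
    ← Finset.fold_image (g := σ) fun x _ y _ h => σ.injective h, Finset.image_erase σ.injective,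
    Finset.image_univ_equiv, Equiv.apply_symm_apply]

theorem lazyRev_comp_perm {b : Fin (n + 1) → ℝ} (hb : Function.Injective b)
    (σ : Equiv.Perm (Fin (n + 1))) (r : Fin (n + 1) → ℝ) :
    lazyRev (b ∘ σ) (r ∘ σ) = lazyRev b r := by
  simp only [lazyRev, lazyWinner_comp_perm hb σ, secondMax_comp_perm hb σ, Function.comp_apply,
    Equiv.apply_symm_apply]

theorem lazyRev_congr_reserve {b r r' : Fin (n + 1) → ℝ}
    (h : r (lazyWinner b) = r' (lazyWinner b)) : lazyRev b r = lazyRev b r' := by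
  simp only [lazyRev, h]

theorem measurable_lazyWinner : Measurable (lazyWinner (n := n)) := by
  refine measurable_to_countable' fun i => ?_
  simp only [Set.preimage, Set.mem_singleton_iff, lazyWinner_eq_iff]
  have hle : ∀ i j : Fin (n + 1), Measurable fun b : Fin (n + 1) → ℝ => b j ≤ b i := fun i j =>
    measurableSet_setOfPred.1 (measurableSet_le (measurable_pi_apply j) (measurable_pi_apply i))
  exact Measurable.setOf
    (.and (.forall (hle i)) (.forall fun i' => .imp (.forall (hle i')) measurable_const))

theorem measurable_fold_max {ι : Type*} (s : Finset ι) :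
    Measurable fun b : ι → ℝ => s.fold max 0 b := by
  induction s using Finset.induction with
  | empty => exact measurable_const
  | insert a s ha ih => simpa only [Finset.fold_insert ha] using (measurable_pi_apply a).max ih

theorem measurable_lazyRev (r : Fin (n + 1) → ℝ) :
    Measurable fun b : Fin (n + 1) → ℝ => lazyRev b r := by
  let revAt : Fin (n + 1) × (Fin (n + 1) → ℝ) → ℝ := fun p =>
    if r p.1 ≤ p.2 p.1 then max (r p.1) ((Finset.univ.erase p.1).fold max 0 p.2) else 0
  have : Measurable revAt := measurable_from_prod_countable_right fun i => by
    dsimp only [revAt]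
    exact (measurable_const.max (measurable_fold_max _)).ite
      (measurableSet_le measurable_const (measurable_pi_apply i)) measurable_const
  exact this.comp (measurable_lazyWinner.prodMk measurable_id)

end Winner

section Measure

variable {α : Type*} [MeasurableSpace α]

theorem measurePreserving_comp_perm {ι : Type*} [Fintype ι] (ν : Measure α) [SigmaFinite ν]
    (σ : Equiv.Perm ι) :
    MeasurePreserving (fun b : ι → α => b ∘ σ) (Measure.pi fun _ => ν)
      (Measure.pi fun _ => ν) := by
  convert measurePreserving_piCongrLeft (fun _ => ν) σ.symm
  ext b
  simp [MeasurableEquiv.coe_piCongrLeft, Equiv.piCongrLeft_apply]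

theorem lintegral_eq_sum_setLIntegral_fiber {ι : Type*} [Fintype ι] [MeasurableSpace ι]
    [MeasurableSingletonClass ι] {μ : Measure α} {f : α → ι} (hf : Measurable f)
    (g : α → ℝ≥0∞) :
    ∫⁻ a, g a ∂μ = ∑ i, ∫⁻ a in f ⁻¹' {i}, g a ∂μ := by
  rw [← setLIntegral_univ, ← Set.preimage_univ (f := f), ← Set.iUnion_of_singleton,
    Set.preimage_iUnion, lintegral_iUnion (fun i => hf (measurableSet_singleton i))
    (pairwise_disjoint_fiber f), tsum_fintype]

variable {n : ℕ} (ν : Measure ℝ) [SigmaFinite ν] [NullSingletonClass ν]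

theorem measure_pi_setOf_apply_eq_apply {i j : Fin (n + 1)} (hij : j ≠ i) :
    Measure.pi (fun _ => ν) {b : Fin (n + 1) → ℝ | b i = b j} = 0 := by
  obtain ⟨m, rfl⟩ := Fin.exists_succAbove_eq hij
  have hdiag : MeasurableSet {p : ℝ × (Fin n → ℝ) | p.1 = p.2 m} :=
    measurableSet_eq_fun measurable_fst ((measurable_pi_apply m).comp measurable_snd)
  change Measure.pi _ (MeasurableEquiv.piFinSuccAbove (fun _ => ℝ) i ⁻¹' {p | p.1 = p.2 m}) = 0
  rw [(measurePreserving_piFinSuccAbove (fun _ => ν) i).measure_preimage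
    hdiag.nullMeasurableSet, Measure.prod_apply_symm hdiag]
  simp

theorem ae_injective_pi :
    ∀ᵐ b ∂Measure.pi fun _ : Fin (n + 1) => ν, Function.Injective b := by
  have hties : ∀ i j : Fin (n + 1), ∀ᵐ b ∂Measure.pi fun _ => ν, b i = b j → i = j := by
    intro i j
    by_cases hij : i = j
    · exact ae_of_all _ fun _ _ => hij
    · filter_upwards [measure_eq_zero_iff_ae_notMem.1
        (measure_pi_setOf_apply_eq_apply ν (Ne.symm hij))] with b hb h using absurd h hb
  filter_upwards [ae_all_iff.2 fun i => ae_all_iff.2 (hties i)] with b hb i j using hb i j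

end Measure

theorem Fin.sum_comp_ite_val_lt {α M : Type*} [AddCommMonoid M] {m k : ℕ} (hk : k ≤ m)
    (f : α → M) (a b : α) :
    ∑ i : Fin m, f (if (i : ℕ) < k then a else b) = k • f a + (m - k) • f b := by
  simp only [apply_ite f]
  rw [Finset.sum_ite, Finset.sum_const, Finset.sum_const, Finset.filter_not,
    card_sdiff_of_subset (filter_subset _ _), Fin.card_filter_val_lt, min_eq_right hk, card_univ,
    Fintype.card_fin]

theorem ENNReal.div_mul_add_one_sub_div_mul {k m : ℕ} (hm : m ≠ 0) (a b : ℝ≥0∞) :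
    (k / m : ℝ≥0∞) * (m * a) + (1 - k / m) * (m * b) = k * a + ((m - k : ℕ) : ℝ≥0∞) * b := by
  have hm' : (m : ℝ≥0∞) ≠ 0 := Nat.cast_ne_zero.2 hm
  have hm_top : (m : ℝ≥0∞) ≠ ⊤ := ENNReal.natCast_ne_top m
  have hsub : 1 - (k / m : ℝ≥0∞) = ((m - k : ℕ) : ℝ≥0∞) / m := by
    rw [ENNReal.natCast_sub, ENNReal.sub_div fun _ _ => hm', ENNReal.div_self hm' hm_top]
  rw [hsub, ← mul_assoc, ← mul_assoc, ENNReal.div_mul_cancel hm' hm_top,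
    ENNReal.div_mul_cancel hm' hm_top]

section Symmetry

variable {n : ℕ}

theorem lintegral_lazyRev_eq_sum (μ : Measure (Fin (n + 1) → ℝ)) (r : Fin (n + 1) → ℝ) :
    ∫⁻ b, ENNReal.ofReal (lazyRev b r) ∂μ =
      ∑ i, ∫⁻ b in {b | lazyWinner b = i}, ENNReal.ofReal (lazyRev b fun _ => r i) ∂μ := by
  rw [lintegral_eq_sum_setLIntegral_fiber measurable_lazyWinner]
  exact sum_congr rfl fun i _ => setLIntegral_congr_fun
    (measurable_lazyWinner (measurableSet_singleton i)) fun b (hb : lazyWinner b = i) =>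
      congrArg ENNReal.ofReal (lazyRev_congr_reserve (by rw [hb]))

variable (ν : Measure ℝ) [SigmaFinite ν] [NullSingletonClass ν]

theorem setLIntegral_lazyWinner_eq_of_perm_invariant {g : (Fin (n + 1) → ℝ) → ℝ≥0∞}
    (hg : Measurable g)
    (hperm : ∀ b (σ : Equiv.Perm (Fin (n + 1))), Function.Injective b → g (b ∘ σ) = g b)
    (i j : Fin (n + 1)) :
    ∫⁻ b in {b | lazyWinner b = i}, g b ∂(Measure.pi fun _ => ν) =
      ∫⁻ b in {b | lazyWinner b = j}, g b ∂(Measure.pi fun _ => ν) := by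
  have hW : ∀ k : Fin (n + 1), MeasurableSet {b : Fin (n + 1) → ℝ | lazyWinner b = k} :=
    fun k => measurable_lazyWinner (measurableSet_singleton k)
  rw [← lintegral_indicator (hW i), ← lintegral_indicator (hW j),
    ← (measurePreserving_comp_perm ν (Equiv.swap i j)).lintegral_comp (hg.indicator (hW i))]
  refine lintegral_congr_ae ?_
  filter_upwards [ae_injective_pi ν] with b hb
  have hwin : lazyWinner (b ∘ Equiv.swap i j) = i ↔ lazyWinner b = j := by
    rw [lazyWinner_comp_perm hb, Equiv.symm_apply_eq, Equiv.swap_apply_left]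
  simp only [Set.indicator_apply, Set.mem_ofPred_eq, hwin, hperm b _ hb]

theorem lintegral_lazyRev_pi_eq_sum (r : Fin (n + 1) → ℝ) :
    ∫⁻ b, ENNReal.ofReal (lazyRev b r) ∂(Measure.pi fun _ => ν) =
      ∑ i, ∫⁻ b in {b : Fin (n + 1) → ℝ | lazyWinner b = 0},
        ENNReal.ofReal (lazyRev b fun _ => r i) ∂(Measure.pi fun _ => ν) := by
  rw [lintegral_lazyRev_eq_sum]
  exact sum_congr rfl fun i _ => setLIntegral_lazyWinner_eq_of_perm_invariant ν
    (measurable_lazyRev _).ennreal_ofReal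
    (fun b σ hb => congrArg ENNReal.ofReal (lazyRev_comp_perm hb σ fun _ => r i)) i 0

end Symmetry

theorem ab_testing_lazy_interpolates_general {n : ℕ}
    (ν : Measure ℝ) [IsProbabilityMeasure ν] (hatomless : ∀ x : ℝ, ν {x} = 0)
    (ρ : ℝ) (k : ℕ) (hk : k ≤ n + 1) :
    ∫⁻ b, ENNReal.ofReal (lazyRev b fun i => if (i : ℕ) < k then ρ else 0)
        ∂(Measure.pi fun _ : Fin (n + 1) => ν) =
      ((k : ℝ≥0∞) / (n + 1)) *
          ∫⁻ b, ENNReal.ofReal (lazyRev b fun _ => ρ)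
            ∂(Measure.pi fun _ : Fin (n + 1) => ν) +
        (1 - (k : ℝ≥0∞) / (n + 1)) *
          ∫⁻ b, ENNReal.ofReal (lazyRev b fun _ => 0)
            ∂(Measure.pi fun _ : Fin (n + 1) => ν) := by
  have : NullSingletonClass ν := ⟨hatomless⟩
  set share : ℝ → ℝ≥0∞ := fun c => ∫⁻ b in {b : Fin (n + 1) → ℝ | lazyWinner b = 0},
    ENNReal.ofReal (lazyRev b fun _ => c) ∂(Measure.pi fun _ => ν)
  have hrev : ∀ r, ∫⁻ b, ENNReal.ofReal (lazyRev b r) ∂(Measure.pi fun _ => ν) =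
      ∑ i, share (r i) := lintegral_lazyRev_pi_eq_sum ν
  rw [hrev, hrev, hrev, Fin.sum_comp_ite_val_lt hk share]
  simp only [Finset.sum_const, card_univ, Fintype.card_fin, nsmul_eq_mul]
  rw [← Nat.cast_add_one, ENNReal.div_mul_add_one_sub_div_mul n.succ_ne_zero]

theorem ab_testing_lazy_interpolates {n : ℕ} (f : ℝ → ℝ)
    (hf0 : ∀ x, 0 ≤ f x) (hfneg : ∀ x, x < 0 → f x = 0)
    (ν : Measure ℝ) (hν : ν = volume.withDensity fun x => ENNReal.ofReal (f x))
    [IsProbabilityMeasure ν] (hatomless : ∀ x : ℝ, ν {x} = 0)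
    (F : ℝ → ℝ) (hF : ∀ x, F x = (ν (Set.Iic x)).toReal)
    (φ : ℝ → ℝ) (hφ : ∀ x, φ x = x - (1 - F x) / f x)
    (hreg : MonotoneOn φ (Set.Ici 0))
    (ρ : ℝ) (hρ : 0 ≤ ρ) (hφρ : φ ρ = 0)
    (k : ℕ) (hk : k ≤ n + 1) :
    ∫⁻ b, ENNReal.ofReal (lazyRev b fun i => if (i : ℕ) < k then ρ else 0)
        ∂(Measure.pi fun _ : Fin (n + 1) => ν) =
      ((k : ℝ≥0∞) / (n + 1)) *
          ∫⁻ b, ENNReal.ofReal (lazyRev b fun _ => ρ)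
            ∂(Measure.pi fun _ : Fin (n + 1) => ν) +
        (1 - (k : ℝ≥0∞) / (n + 1)) *
          ∫⁻ b, ENNReal.ofReal (lazyRev b fun _ => 0)
            ∂(Measure.pi fun _ : Fin (n + 1) => ν) :=
  ab_testing_lazy_interpolates_general ν hatomless ρ k hk
end

section
/- Explicit formula for partially applied eager reserves: let bids be i.i.d. on [0,1] with continuous density f > 0 on [0,1], CDF F(x) = ∫₀ˣ f, and continuously differentiable, nondecreasing virtual value φ(x) = x − (1 − F(x))/f(x), with φ(ρ) = 0 for some ρ ∈ (0,1). For 0 ≤ k ≤ n, with r^k the reserve vector equal to ρ on the first k coordinates and 0 elsewhere, the expected eager revenue equals RevE(k) = ∫_ρ^1 φ(x) · n F(x)^{n−1} f(x) dx − (if k < n then F(ρ)^n · ∫₀^ρ (F(x)/F(ρ))^{n−k} φ'(x) dx else 0). -/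
/-!
Write `F` for the bid distribution function, `N = n + 1` and `m = N - k`. For `0 ≤ t` the eager
revenue is at most `t` exactly when every bidder meeting their reserve has reserve at most `t` and
at most one of them bids above `t`. For the reserve vector `r^k` this says that the bid vector lies
in a product set `∏ C i` and leaves a smaller product `∏ A i` in at most one coordinate, so the
revenue has distribution function `F(ρ)^k (F^m + m (1 - F) F^(m-1))(t)` for `t < ρ` and
`(F^N + N (1 - F) F^(N-1))(t)` for `t ≥ ρ`. The layer-cake formula turns the expected revenue into
the integral of one minus this function. Since `φ f = x f - (1 - F)`, integrating `x (F^j)'` by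
parts rewrites both pieces through the virtual value; a last integration by parts on `[0, ρ]`,
whose boundary terms vanish because `φ(ρ) = 0` and `F(0) = 0`, produces the correction term.
-/

open MeasureTheory Finset
open scoped Classical ENNReal

section Counting

variable {M : Type*} [CommMonoid M] {N k : ℕ}

@[to_additive]
lemma prod_ite_val_lt (hk : k ≤ N) (p q : M) :
    ∏ i : Fin N, (if (i : ℕ) < k then p else q) = p ^ k * q ^ (N - k) := by
  have hcard := card_filter_add_card_filter_not (s := (univ : Finset (Fin N)))
    (fun i : Fin N => (i : ℕ) < k)
  rw [Fin.card_filter_val_lt, min_eq_right hk, card_univ, Fintype.card_fin] at hcard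
  rw [prod_ite, prod_const, prod_const, Fin.card_filter_val_lt, min_eq_right hk]
  congr 2
  omega

lemma prod_sdiff_ite_val_lt {j : Fin N} (hj : k ≤ j) (p q : M) :
    ∏ i ∈ univ \ {j}, (if (i : ℕ) < k then p else q) = p ^ k * q ^ (N - k - 1) := by
  have hlt : (univ \ {j}).filter (fun i : Fin N => (i : ℕ) < k) =
      univ.filter (fun i : Fin N => (i : ℕ) < k) := by
    ext i
    simp only [mem_filter, mem_sdiff, mem_univ, mem_singleton, true_and]
    exact ⟨And.right, fun hi => ⟨fun h => by omega, hi⟩⟩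
  have hcard := card_filter_add_card_filter_not (s := univ \ {j}) (fun i : Fin N => (i : ℕ) < k)
  rw [hlt, Fin.card_filter_val_lt, card_sdiff_of_subset (subset_univ _), card_univ,
    Fintype.card_fin, card_singleton, min_eq_right (by omega)] at hcard
  rw [prod_ite, prod_const, prod_const, hlt, Fin.card_filter_val_lt, min_eq_right (by omega)]
  congr 2
  omega

end Counting

open Set Function

def atMostOneOutside {ι α : Type*} (A C : ι → Set α) : Set (ι → α) :=
  {b | (∀ i, b i ∈ C i) ∧ ∀ i j, b i ∉ A i → b j ∉ A j → i = j}

section Auction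

variable {n : ℕ} {b r : Fin (n + 1) → ℝ} {t : ℝ}

lemma eagerWinner_spec (hS : (Finset.univ.filter fun i => r i ≤ b i).Nonempty) :
    r (eagerWinner b r hS) ≤ b (eagerWinner b r hS) ∧
      ∀ i, r i ≤ b i → b i ≤ b (eagerWinner b r hS) := by
  have h : eagerWinner b r hS ∈ _ := Finset.min'_mem _ _
  simp only [Finset.mem_filter, Finset.mem_univ, true_and] at h
  exact h

lemma eagerRev_nonneg (b r : Fin (n + 1) → ℝ) : 0 ≤ eagerRev b r := by
  unfold eagerRev
  split
  · exact le_max_of_le_right ((Finset.le_fold_max _).mpr (Or.inl le_rfl))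
  · exact le_rfl

lemma eagerRev_le_iff_of_nonempty (ht : 0 ≤ t)
    (hS : (Finset.univ.filter fun i => r i ≤ b i).Nonempty) :
    eagerRev b r ≤ t ↔
      r (eagerWinner b r hS) ≤ t ∧ ∀ i, r i ≤ b i → i ≠ eagerWinner b r hS → b i ≤ t := by
  rw [eagerRev, dif_pos hS, max_le_iff, Finset.fold_max_le]
  simp [ht, and_comm]

theorem eagerRev_le_iff (ht : 0 ≤ t) :
    eagerRev b r ≤ t ↔
      b ∈ atMostOneOutside (fun i => Iic t ∪ Iio (r i)) (fun i => {x | r i ≤ x → r i ≤ t}) := by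
  simp only [atMostOneOutside, Set.mem_ofPred_eq, Set.mem_union, Set.mem_Iic, Set.mem_Iio,
    not_or, not_le, not_lt]
  by_cases hS : (Finset.univ.filter fun i => r i ≤ b i).Nonempty
  · obtain ⟨hw, hw_max⟩ := eagerWinner_spec hS
    rw [eagerRev_le_iff_of_nonempty ht hS]
    set w := eagerWinner b r hS
    constructor
    · rintro ⟨hwt, hle⟩
      have eq_w : ∀ i, t < b i → r i ≤ b i → i = w := fun i hti hi =>
        by_contra fun hiw => (hle i hi hiw).not_gt hti
      refine ⟨fun i hi => ?_, fun i j ⟨hti, hi⟩ ⟨htj, hj⟩ => ?_⟩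
      · rcases eq_or_ne i w with rfl | hiw
        exacts [hwt, hi.trans (hle i hi hiw)]
      · exact (eq_w i hti hi).trans (eq_w j htj hj).symm
    · rintro ⟨hC, hA⟩
      refine ⟨hC w hw, fun i hi hiw => not_lt.mp fun hti => hiw ?_⟩
      exact hA i w ⟨hti, hi⟩ ⟨hti.trans_le (hw_max i hi), hw⟩
  · have hS' : ∀ i, b i < r i := fun i => not_le.mp fun hi => hS ⟨i, by simpa using hi⟩
    rw [eagerRev, dif_neg hS]
    exact iff_of_true ht ⟨fun i hi => absurd hi (hS' i).not_ge,
      fun i _ ⟨_, hi⟩ => absurd hi (hS' i).not_ge⟩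

end Auction

section AtMostOneOutside

variable {ι α : Type*} {A C : ι → Set α}

lemma atMostOneOutside_eq_union [DecidableEq ι] (hAC : ∀ i, A i ⊆ C i) :
    atMostOneOutside A C = pi univ A ∪ ⋃ j, pi univ (update A j (C j \ A j)) := by
  ext b
  simp only [atMostOneOutside, Set.mem_ofPred_eq, Set.mem_union, Set.mem_iUnion,
    Set.mem_univ_pi]
  constructor
  · rintro ⟨hC, hA⟩
    by_cases h : ∀ i, b i ∈ A i
    · exact Or.inl h
    · obtain ⟨j, hj⟩ := not_forall.mp h
      refine Or.inr ⟨j, fun i => ?_⟩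
      rcases eq_or_ne i j with rfl | hij
      · simpa using ⟨hC i, hj⟩
      · rw [update_of_ne hij]
        exact not_not.mp fun hi => hij (hA i j hi hj)
  · rintro (h | ⟨j, h⟩)
    · exact ⟨fun i => hAC i (h i), fun i _ hi => absurd (h i) hi⟩
    · have hA_of_ne : ∀ i, i ≠ j → b i ∈ A i := fun i hij => by
        simpa [update_of_ne hij] using h i
      have hj : b j ∈ C j \ A j := by simpa using h j
      refine ⟨fun i => ?_, fun i i' hi hi' => ?_⟩
      · rcases eq_or_ne i j with rfl | hij
        exacts [hj.1, hAC i (hA_of_ne i hij)]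
      · exact (not_not.mp (mt (hA_of_ne i) hi)).trans (not_not.mp (mt (hA_of_ne i') hi')).symm

variable [Fintype ι] [MeasurableSpace α]

lemma measurableSet_pi_update [DecidableEq ι] (hA : ∀ i, MeasurableSet (A i))
    (hC : ∀ i, MeasurableSet (C i)) (j : ι) :
    MeasurableSet (pi univ (update A j (C j \ A j))) :=
  .univ_pi fun i => by
    rcases eq_or_ne i j with rfl | hij
    · simpa using (hC i).diff (hA i)
    · simpa [update_of_ne hij] using hA i

lemma measurableSet_atMostOneOutside (hA : ∀ i, MeasurableSet (A i))
    (hC : ∀ i, MeasurableSet (C i)) (hAC : ∀ i, A i ⊆ C i) :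
    MeasurableSet (atMostOneOutside A C) := by
  rw [atMostOneOutside_eq_union hAC]
  exact (MeasurableSet.univ_pi hA).union (.iUnion (measurableSet_pi_update hA hC))

theorem measureReal_pi_atMostOneOutside [DecidableEq ι] (μ : ι → Measure α)
    [∀ i, IsFiniteMeasure (μ i)] (hA : ∀ i, MeasurableSet (A i))
    (hC : ∀ i, MeasurableSet (C i)) (hAC : ∀ i, A i ⊆ C i) :
    (Measure.pi μ).real (atMostOneOutside A C) =
      ∏ i, (μ i).real (A i) +
        ∑ j, (μ j).real (C j \ A j) * ∏ i ∈ Finset.univ \ {j}, (μ i).real (A i) := by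
  have box : ∀ s : ι → Set α, (Measure.pi μ).real (pi univ s) = ∏ i, (μ i).real (s i) := by
    simp [measureReal_def, Measure.pi_pi, ENNReal.toReal_prod]
  have outside : ∀ {b : ι → α} {j}, b ∈ pi univ (update A j (C j \ A j)) → b j ∉ A j :=
    fun {b j} hb => (by simpa using Set.mem_univ_pi.mp hb j : b j ∈ C j ∧ b j ∉ A j).2
  have inside : ∀ {b : ι → α} {i j}, i ≠ j → b ∈ pi univ (update A j (C j \ A j)) →
      b i ∈ A i := fun {b i j} hij hb => by
    simpa [update_of_ne hij] using Set.mem_univ_pi.mp hb i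
  rw [atMostOneOutside_eq_union hAC,
    measureReal_union ?_ (.iUnion (measurableSet_pi_update hA hC)),
    measureReal_iUnion_fintype ?_ (measurableSet_pi_update hA hC), box]
  · congr 1
    refine Finset.sum_congr rfl fun j _ => ?_
    rw [box, Finset.prod_congr rfl fun i _ => apply_update (fun i s => (μ i).real s) A j _ i,
      Finset.prod_update_of_mem (Finset.mem_univ j)]
  · exact fun j j' hjj' => Set.disjoint_left.mpr fun b hb hb' => outside hb (inside hjj' hb')
  · refine Set.disjoint_iUnion_right.mpr fun j => Set.disjoint_left.mpr fun b hb hb' => ?_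
    exact outside hb' (Set.mem_univ_pi.mp hb j)

end AtMostOneOutside

lemma measurable_eagerRev {n : ℕ} (r : Fin (n + 1) → ℝ) : Measurable fun b => eagerRev b r := by
  refine measurable_of_Iic fun t => ?_
  rcases lt_or_ge t 0 with ht | ht
  · convert MeasurableSet.empty
    exact Set.eq_empty_of_forall_notMem fun b hb => (ht.trans_le (eagerRev_nonneg b r)).not_ge hb
  · rw [show (fun b => eagerRev b r) ⁻¹' Iic t = _ from Set.ext fun b => eagerRev_le_iff ht]
    refine measurableSet_atMostOneOutside (fun i => measurableSet_Iic.union measurableSet_Iio)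
      (fun i => measurableSet_Ici.imp (MeasurableSet.const _)) fun i x hx hrx => ?_
    rcases hx with hx | hx
    exacts [hrx.trans hx, absurd hrx (not_le.mpr hx)]

/-- The probability that at most one of `m` independent events of probability `1 - p` occurs. -/
def probAtMostOne (m : ℕ) (p : ℝ) : ℝ := p ^ m + m * ((1 - p) * p ^ (m - 1))

section Reserve

variable {n k : ℕ} {ρ t : ℝ} {b : Fin (n + 1) → ℝ}

lemma eagerRev_le_iff_of_lt (ht : 0 ≤ t) (htρ : t < ρ) :
    eagerRev b (fun i => if (i : ℕ) < k then ρ else 0) ≤ t ↔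
      b ∈ atMostOneOutside (fun i : Fin (n + 1) => if (i : ℕ) < k then Iio ρ else Iic t)
        (fun i => if (i : ℕ) < k then Iio ρ else univ) := by
  rw [eagerRev_le_iff ht]
  convert Iff.rfl using 3 <;> ext i x <;> split_ifs <;> simp [htρ.not_ge] <;> intro <;> linarith

lemma eagerRev_le_iff_of_le (ht : 0 ≤ t) (hρt : ρ ≤ t) :
    eagerRev b (fun i => if (i : ℕ) < k then ρ else 0) ≤ t ↔
      b ∈ atMostOneOutside (fun _ => Iic t) (fun _ => univ) := by
  rw [eagerRev_le_iff ht]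
  convert Iff.rfl using 3 <;> ext i x <;> split_ifs <;> simp <;> intro <;> linarith

end Reserve

theorem measureReal_pi_atMostOneOutside_ite (ν : Measure ℝ) [IsProbabilityMeasure ν]
    {N k : ℕ} (hk : k ≤ N) (ρ t : ℝ) :
    (Measure.pi fun _ : Fin N => ν).real
        (atMostOneOutside (fun i : Fin N => if (i : ℕ) < k then Iio ρ else Iic t)
          (fun i => if (i : ℕ) < k then Iio ρ else univ)) =
      ν.real (Iio ρ) ^ k * probAtMostOne (N - k) (ν.real (Iic t)) := by
  rw [measureReal_pi_atMostOneOutside _ (fun i => by split_ifs <;> measurability)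
    (fun i => by split_ifs <;> measurability) (fun i => by split_ifs <;> simp)]
  have outside : ∀ j : Fin N, ν.real ((if (j : ℕ) < k then Iio ρ else univ) \
      (if (j : ℕ) < k then Iio ρ else Iic t)) = if (j : ℕ) < k then 0 else 1 - ν.real (Iic t) := by
    intro j
    split_ifs
    · simp
    · rw [← compl_eq_univ_sdiff, probReal_compl_eq_one_sub measurableSet_Iic]
  simp_rw [apply_ite (fun s => ν.real s), outside, prod_ite_val_lt hk, ite_mul, zero_mul]
  set p := ν.real (Iio ρ)
  set q := ν.real (Iic t)
  have term : ∀ j : Fin N, (if (j : ℕ) < k then 0 else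
      (1 - q) * ∏ i ∈ Finset.univ \ {j}, if (i : ℕ) < k then p else q) =
        if (j : ℕ) < k then 0 else (1 - q) * (p ^ k * q ^ (N - k - 1)) := fun j => by
    split_ifs with hj
    · rfl
    · rw [prod_sdiff_ite_val_lt (not_lt.mp hj)]
  rw [Finset.sum_congr rfl fun j _ => term j, sum_ite_val_lt hk, probAtMostOne, smul_zero,
    zero_add, nsmul_eq_mul]
  ring

theorem measureReal_lt_eagerRev (ν : Measure ℝ) [IsProbabilityMeasure ν] {n k : ℕ}
    (hk : k ≤ n + 1) {ρ t : ℝ} (ht : 0 ≤ t) :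
    (Measure.pi fun _ : Fin (n + 1) => ν).real
        {b | t < eagerRev b fun i => if (i : ℕ) < k then ρ else 0} =
      1 - if t < ρ then ν.real (Iio ρ) ^ k * probAtMostOne (n + 1 - k) (ν.real (Iic t))
        else probAtMostOne (n + 1) (ν.real (Iic t)) := by
  have hcompl : {b : Fin (n + 1) → ℝ | t < eagerRev b fun i => if (i : ℕ) < k then ρ else 0} =
      {b | eagerRev b (fun i => if (i : ℕ) < k then ρ else 0) ≤ t}ᶜ := by
    ext b
    simp
  rw [hcompl, probReal_compl_eq_one_sub (measurableSet_le (measurable_eagerRev _) measurable_const)]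
  congr 1
  split_ifs with htρ
  · rw [← measureReal_pi_atMostOneOutside_ite ν hk]
    exact congrArg _ (Set.ext fun b => eagerRev_le_iff_of_lt ht htρ)
  · rw [show {b | _ ≤ t} = _ from Set.ext fun b => eagerRev_le_iff_of_le ht (not_lt.mp htρ)]
    simpa using measureReal_pi_atMostOneOutside_ite ν (Nat.zero_le (n + 1)) ρ t

theorem toReal_lintegral_ofReal_eq_integral_measureReal_lt {α : Type*} [MeasurableSpace α]
    {μ : Measure α} [IsFiniteMeasure μ] {X : α → ℝ} (hX0 : ∀ ω, 0 ≤ X ω) (hX : Measurable X) :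
    (∫⁻ ω, ENNReal.ofReal (X ω) ∂μ).toReal = ∫ t in Ioi 0, μ.real {ω | t < X ω} := by
  have antitone : Antitone fun t => μ.real {ω | t < X ω} := fun s t hst =>
    measureReal_mono fun ω (h : t < X ω) => hst.trans_lt h
  rw [lintegral_eq_lintegral_meas_lt μ (ae_of_all _ hX0) hX.aemeasurable,
    integral_eq_lintegral_of_nonneg_ae (ae_of_all _ fun _ => measureReal_nonneg)
      antitone.measurable.aestronglyMeasurable]
  simp only [ofReal_measureReal (measure_ne_top μ _)]

lemma integral_Ioi_eq_of_eqOn {S g₁ g₂ : ℝ → ℝ} {a ρ b : ℝ} (haρ : a < ρ) (hρb : ρ ≤ b)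
    (h₁ : EqOn S g₁ (Ioo a ρ)) (h₂ : EqOn S g₂ (Icc ρ b)) (h₃ : EqOn S 0 (Ioi b))
    (hg₁ : ContinuousOn g₁ (Icc a ρ)) (hg₂ : ContinuousOn g₂ (Icc ρ b)) :
    ∫ t in Ioi a, S t = (∫ t in a..ρ, g₁ t) + ∫ t in ρ..b, g₂ t := by
  have hS₁ : IntegrableOn S (Ioo a ρ) :=
    (hg₁.integrableOn_Icc.mono_set Ioo_subset_Icc_self).congr_fun h₁.symm measurableSet_Ioo
  have hS₂ : IntegrableOn S (Icc ρ b) := hg₂.integrableOn_Icc.congr_fun h₂.symm measurableSet_Icc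
  rw [setIntegral_eq_of_subset_of_forall_sdiff_eq_zero measurableSet_Ioi Ioc_subset_Ioi_self
      fun t ht => h₃ (not_le.mp fun h => ht.2 ⟨ht.1, h⟩),
    ← Ioo_union_Icc_eq_Ioc haρ hρb,
    setIntegral_union (Set.disjoint_left.mpr fun t ht ht' => ht.2.not_ge ht'.1) measurableSet_Icc
      hS₁ hS₂,
    setIntegral_congr_fun measurableSet_Ioo h₁, setIntegral_congr_fun measurableSet_Icc h₂,
    intervalIntegral.integral_of_le haρ.le, intervalIntegral.integral_of_le hρb,
    integral_Ioc_eq_integral_Ioo, integral_Icc_eq_integral_Ioc]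

theorem toReal_lintegral_eagerRev_eq (ν : Measure ℝ) [IsProbabilityMeasure ν]
    [NullSingletonClass ν] {n k : ℕ} (hk : k ≤ n + 1) {F : ℝ → ℝ}
    (hνF : ∀ t, 0 ≤ t → ν.real (Iic t) = F t) (hF_one : ∀ t, 1 ≤ t → F t = 1)
    (hFc : Continuous F) {ρ : ℝ} (hρ0 : 0 < ρ) (hρ1 : ρ ≤ 1) :
    (∫⁻ b, ENNReal.ofReal (eagerRev b fun i => if (i : ℕ) < k then ρ else 0)
        ∂(Measure.pi fun _ : Fin (n + 1) => ν)).toReal =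
      (∫ t in 0..ρ, (1 - F ρ ^ k * probAtMostOne (n + 1 - k) (F t))) +
        ∫ t in ρ..1, (1 - probAtMostOne (n + 1) (F t)) := by
  have hνIio : ν.real (Iio ρ) = F ρ := (measureReal_congr Iio_ae_eq_Iic).trans (hνF ρ hρ0.le)
  rw [toReal_lintegral_ofReal_eq_integral_measureReal_lt (fun b => eagerRev_nonneg b _)
    (measurable_eagerRev _)]
  refine integral_Ioi_eq_of_eqOn hρ0 hρ1 (fun t ht => ?_) (fun t ht => ?_) (fun t ht => ?_)
    (by unfold probAtMostOne; fun_prop) (by unfold probAtMostOne; fun_prop)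
  · rw [measureReal_lt_eagerRev ν hk ht.1.le, if_pos ht.2, hνIio, hνF t ht.1.le]
  · rw [measureReal_lt_eagerRev ν hk (hρ0.le.trans ht.1), if_neg (not_lt.mpr ht.1),
      hνF t (hρ0.le.trans ht.1)]
  · have ht1 : (1 : ℝ) ≤ t := le_of_lt ht
    rw [measureReal_lt_eagerRev ν hk (zero_le_one.trans ht1), if_neg (hρ1.trans ht1).not_gt,
      hνF t (zero_le_one.trans ht1), hF_one t ht1]
    simp [probAtMostOne]

lemma ContDiffOn.intervalIntegrable_deriv {g : ℝ → ℝ} {a b : ℝ} (hab : a < b)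
    (hg : ContDiffOn ℝ 1 g (Icc a b)) : IntervalIntegrable (deriv g) volume a b := by
  rw [intervalIntegrable_iff_integrableOn_Ioo_of_le hab.le]
  have hcont := hg.continuousOn_derivWithin (uniqueDiffOn_Icc hab) le_rfl
  refine (hcont.integrableOn_Icc.mono_set Ioo_subset_Icc_self).congr_fun (fun x hx => ?_)
    measurableSet_Ioo
  exact derivWithin_of_mem_nhds (Icc_mem_nhds hx.1 hx.2)

section VirtualValue

variable {f F φ : ℝ → ℝ} {a b : ℝ}

theorem integral_probAtMostOne (hab : a ≤ b) (hFc : ContinuousOn F (Icc a b))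
    (hFd : ∀ x ∈ Ioo a b, HasDerivAt F (f x) x) (hfc : ContinuousOn f (Icc a b))
    (hφ : ∀ x ∈ Icc a b, φ x * f x = x * f x - (1 - F x)) (m : ℕ) :
    ∫ x in a..b, probAtMostOne m (F x) =
      b * F b ^ m - a * F a ^ m - ∫ x in a..b, φ x * (m * F x ^ (m - 1) * f x) := by
  rw [← uIcc_of_le hab] at hFc hfc hφ
  have by_parts : ∫ x in a..b, x * (m * F x ^ (m - 1) * f x) =
      b * F b ^ m - a * F a ^ m - ∫ x in a..b, 1 * F x ^ m := by
    refine intervalIntegral.integral_mul_deriv_eq_deriv_mul_of_hasDerivAt continuousOn_id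
      (hFc.pow m) (fun x _ => hasDerivAt_id x) ?_ intervalIntegrable_const ?_
    · rw [min_eq_left hab, max_eq_right hab]
      exact fun x hx => (hFd x hx).pow m
    · exact ((continuousOn_const.mul (hFc.pow _)).mul hfc).intervalIntegrable
  have virtual : ∫ x in a..b, φ x * (m * F x ^ (m - 1) * f x) =
      ∫ x in a..b, (x * (m * F x ^ (m - 1) * f x) - m * ((1 - F x) * F x ^ (m - 1))) :=
    intervalIntegral.integral_congr fun x hx => by
      linear_combination (m * F x ^ (m - 1)) * hφ x hx
  have hFm : IntervalIntegrable (fun x => F x ^ m) volume a b := (hFc.pow m).intervalIntegrable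
  have hrest : IntervalIntegrable (fun x => m * ((1 - F x) * F x ^ (m - 1))) volume a b :=
    (continuousOn_const.mul ((continuousOn_const.sub hFc).mul (hFc.pow _))).intervalIntegrable
  unfold probAtMostOne
  rw [virtual, intervalIntegral.integral_sub _ hrest, by_parts,
    intervalIntegral.integral_add hFm hrest]
  · simp only [one_mul]
    ring
  · exact (continuousOn_id.mul ((continuousOn_const.mul (hFc.pow _)).mul hfc)).intervalIntegrable

lemma integral_mul_deriv_pow (hab : a < b) (hφ : ContDiffOn ℝ 1 φ (Icc a b))
    (hFc : ContinuousOn F (Icc a b)) (hFd : ∀ x ∈ Ioo a b, HasDerivAt F (f x) x)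
    (hfc : ContinuousOn f (Icc a b)) (m : ℕ) :
    ∫ x in a..b, φ x * (m * F x ^ (m - 1) * f x) =
      φ b * F b ^ m - φ a * F a ^ m - ∫ x in a..b, deriv φ x * F x ^ m := by
  rw [← uIcc_of_le hab.le] at hFc hfc
  have hIoo : Ioo (min a b) (max a b) = Ioo a b := by rw [min_eq_left hab.le, max_eq_right hab.le]
  refine intervalIntegral.integral_mul_deriv_eq_deriv_mul_of_hasDerivAt
    (v := fun x => F x ^ m) (uIcc_of_le hab.le ▸ hφ.continuousOn) (hFc.pow m) ?_ ?_
    (hφ.intervalIntegrable_deriv hab)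
    ((continuousOn_const.mul (hFc.pow _)).mul hfc).intervalIntegrable
  all_goals rw [hIoo]
  · exact fun x hx => ((hφ.differentiableOn one_ne_zero x (Ioo_subset_Icc_self hx)
      ).differentiableAt (Icc_mem_nhds hx.1 hx.2)).hasDerivAt
  · exact fun x hx => (hFd x hx).pow m

theorem integral_one_sub_probAtMostOne_eq (hFc : Continuous F)
    (hFd : ∀ x ∈ Ioo (0 : ℝ) 1, HasDerivAt F (f x) x) (hfc : ContinuousOn f (Icc 0 1))
    (hφf : ∀ x ∈ Icc (0 : ℝ) 1, φ x * f x = x * f x - (1 - F x))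
    (hφC1 : ContDiffOn ℝ 1 φ (Icc 0 1)) (hF0 : F 0 = 0) (hF1 : F 1 = 1) {ρ : ℝ} (hρ0 : 0 < ρ)
    (hρ1 : ρ < 1) (hFρ : F ρ ≠ 0) (hφρ : φ ρ = 0) {n k : ℕ} (hk : k ≤ n + 1) :
    (∫ t in 0..ρ, (1 - F ρ ^ k * probAtMostOne (n + 1 - k) (F t))) +
        ∫ t in ρ..1, (1 - probAtMostOne (n + 1) (F t)) =
      (∫ x in ρ..1, φ x * ((n + 1 : ℝ) * F x ^ n * f x)) -
        (if k < n + 1 then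
          F ρ ^ (n + 1) * ∫ x in 0..ρ, (F x / F ρ) ^ (n + 1 - k) * deriv φ x
         else 0) := by
  have hρIcc : Icc 0 ρ ⊆ Icc (0 : ℝ) 1 := Icc_subset_Icc le_rfl hρ1.le
  have lower := integral_probAtMostOne hρ0.le hFc.continuousOn
    (fun x hx => hFd x ⟨hx.1, hx.2.trans hρ1⟩) (hfc.mono hρIcc) (fun x hx => hφf x (hρIcc hx))
    (n + 1 - k)
  have upper := integral_probAtMostOne hρ1.le hFc.continuousOn
    (fun x hx => hFd x ⟨hρ0.trans hx.1, hx.2⟩) (hfc.mono (Icc_subset_Icc hρ0.le le_rfl))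
    (fun x hx => hφf x ⟨hρ0.le.trans hx.1, hx.2⟩) (n + 1)
  simp only [Nat.cast_add, Nat.cast_one, Nat.add_sub_cancel, hF1, hF0] at lower upper
  rw [intervalIntegral.integral_sub intervalIntegrable_const
      (by unfold probAtMostOne; exact Continuous.intervalIntegrable (by fun_prop) _ _),
    intervalIntegral.integral_sub intervalIntegrable_const
      (by unfold probAtMostOne; exact Continuous.intervalIntegrable (by fun_prop) _ _),
    intervalIntegral.integral_const_mul, lower, upper]
  simp only [intervalIntegral.integral_const, smul_eq_mul, mul_one, sub_zero, zero_mul, one_pow]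
  set revenue := ∫ x in ρ..1, φ x * ((n + 1 : ℝ) * F x ^ n * f x)
  split_ifs with hkn
  · obtain ⟨m, hm⟩ : ∃ m, n + 1 - k = m + 1 := ⟨n - k, by omega⟩
    have hpow : F ρ ^ (n + 1) = F ρ ^ k * F ρ ^ (m + 1) := by rw [← pow_add]; congr 1; omega
    have by_parts := integral_mul_deriv_pow hρ0 (hφC1.mono hρIcc) hFc.continuousOn
      (fun x hx => hFd x ⟨hx.1, hx.2.trans hρ1⟩) (hfc.mono hρIcc) (m + 1)
    have rescale : ∫ x in 0..ρ, (F x / F ρ) ^ (m + 1) * deriv φ x =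
        (∫ x in 0..ρ, deriv φ x * F x ^ (m + 1)) / F ρ ^ (m + 1) := by
      rw [← intervalIntegral.integral_div]
      congr 1 with x
      ring
    rw [hm, by_parts, rescale, hφρ, hF0, hpow]
    field_simp
    ring
  · obtain rfl : k = n + 1 := by omega
    simp only [Nat.sub_self, CharP.cast_eq_zero, zero_mul, mul_zero, intervalIntegral.integral_zero]
    ring

end VirtualValue

section Density

variable {f : ℝ → ℝ}

lemma measureReal_withDensity_Iic (hf0 : ∀ x, 0 ≤ f x) (hfi : Integrable f)
    (hfneg : ∀ x < 0, f x = 0) {t : ℝ} (ht : 0 ≤ t) :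
    (volume.withDensity fun x => ENNReal.ofReal (f x)).real (Iic t) = ∫ x in 0..t, f x := by
  rw [measureReal_def, withDensity_apply _ measurableSet_Iic,
    ← ofReal_integral_eq_lintegral_ofReal hfi.integrableOn (ae_of_all _ hf0),
    ENNReal.toReal_ofReal (setIntegral_nonneg measurableSet_Iic fun x _ => hf0 x),
    intervalIntegral.integral_of_le ht, ← integral_Icc_eq_integral_Ioc]
  exact setIntegral_eq_of_subset_of_forall_sdiff_eq_zero measurableSet_Iic
    Icc_subset_Iic_self fun x hx => hfneg x (not_le.mp fun h => hx.2 ⟨h, hx.1⟩)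

lemma measureReal_withDensity_Iic_eq_one
    [IsProbabilityMeasure (volume.withDensity fun x => ENNReal.ofReal (f x))] {t : ℝ}
    (hf : ∀ x, t < x → f x = 0) :
    (volume.withDensity fun x => ENNReal.ofReal (f x)).real (Iic t) = 1 := by
  have h : (volume.withDensity fun x => ENNReal.ofReal (f x)) (Ioi t) = 0 := by
    rw [withDensity_apply _ measurableSet_Ioi]
    exact setLIntegral_eq_zero measurableSet_Ioi fun x hx => by simp [hf x hx]
  rw [← compl_Ioi, probReal_compl_eq_one_sub measurableSet_Ioi, measureReal_def, h,
    ENNReal.toReal_zero, sub_zero]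

end Density

theorem eager_ab_testing_formula_general {n : ℕ} (f : ℝ → ℝ)
    (hfc : ContinuousOn f (Set.Icc 0 1)) (hfpos : ∀ x ∈ Set.Icc (0:ℝ) 1, 0 < f x)
    (hfout : ∀ x, x ∉ Set.Icc (0:ℝ) 1 → f x = 0)
    [IsProbabilityMeasure (volume.withDensity fun x => ENNReal.ofReal (f x))]
    (F : ℝ → ℝ) (hF : ∀ x, F x = ∫ t in (0:ℝ)..x, f t)
    (φ : ℝ → ℝ) (hφ : ∀ x, φ x = x - (1 - F x) / f x)
    (hφC1 : ContDiffOn ℝ 1 φ (Set.Icc 0 1))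
    (ρ : ℝ) (hρ : ρ ∈ Set.Ioo (0:ℝ) 1) (hφρ : φ ρ = 0)
    (k : ℕ) (hk : k ≤ n + 1) :
    (∫⁻ b, ENNReal.ofReal (eagerRev b fun i => if (i : ℕ) < k then ρ else 0)
        ∂(Measure.pi fun _ : Fin (n + 1) =>
          volume.withDensity fun x => ENNReal.ofReal (f x))).toReal =
      (∫ x in ρ..1, φ x * ((n + 1 : ℝ) * F x ^ n * f x)) -
        (if k < n + 1 then
          F ρ ^ (n + 1) * ∫ x in (0:ℝ)..ρ, (F x / F ρ) ^ (n + 1 - k) * deriv φ x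
         else 0) := by
  obtain ⟨hρ0, hρ1⟩ := hρ
  have hf0 : ∀ x, 0 ≤ f x := fun x => by
    by_cases hx : x ∈ Icc (0 : ℝ) 1
    exacts [(hfpos x hx).le, (hfout x hx).ge]
  have hfi : Integrable f := hfc.integrableOn_Icc.integrable_of_forall_notMem_eq_zero hfout
  have hνF : ∀ t, 0 ≤ t →
      (volume.withDensity fun x => ENNReal.ofReal (f x)).real (Iic t) = F t := fun t ht => by
    rw [hF, measureReal_withDensity_Iic hf0 hfi (fun x hx => hfout x fun h => hx.not_ge h.1) ht]
  have hF_one : ∀ t, 1 ≤ t → F t = 1 := fun t ht => by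
    rw [← hνF t (zero_le_one.trans ht)]
    exact measureReal_withDensity_Iic_eq_one fun x hx =>
      hfout x fun h => (ht.trans_lt hx).not_ge h.2
  have hFρ : 0 < F ρ := hF ρ ▸ intervalIntegral.intervalIntegral_pos_of_pos_on
    hfi.intervalIntegrable (fun x hx => hfpos x ⟨hx.1.le, hx.2.le.trans hρ1.le⟩) hρ0
  have hFc : Continuous F := by
    simpa only [← funext hF] using
      intervalIntegral.continuous_primitive (fun _ _ => hfi.intervalIntegrable) 0
  have hFd : ∀ x ∈ Ioo (0 : ℝ) 1, HasDerivAt F (f x) x := fun x hx => by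
    rw [show F = _ from funext hF]
    exact intervalIntegral.integral_hasDerivAt_right hfi.intervalIntegrable
      ((hfc.mono Ioo_subset_Icc_self).stronglyMeasurableAtFilter isOpen_Ioo x hx)
      (hfc.continuousAt (Icc_mem_nhds hx.1 hx.2))
  have hφf : ∀ x ∈ Icc (0 : ℝ) 1, φ x * f x = x * f x - (1 - F x) := fun x hx => by
    rw [hφ x]
    field_simp [(hfpos x hx).ne']
  rw [toReal_lintegral_eagerRev_eq _ hk hνF hF_one hFc hρ0 hρ1.le]
  exact integral_one_sub_probAtMostOne_eq hFc hFd hfc hφf hφC1 (by simp [hF]) (hF_one 1 le_rfl)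
    hρ0 hρ1 hFρ.ne' hφρ hk

theorem eager_ab_testing_formula {n : ℕ} (f : ℝ → ℝ)
    (hfc : ContinuousOn f (Set.Icc 0 1)) (hfpos : ∀ x ∈ Set.Icc (0:ℝ) 1, 0 < f x)
    (hfout : ∀ x, x ∉ Set.Icc (0:ℝ) 1 → f x = 0)
    [IsProbabilityMeasure (volume.withDensity fun x => ENNReal.ofReal (f x))]
    (F : ℝ → ℝ) (hF : ∀ x, F x = ∫ t in (0:ℝ)..x, f t)
    (φ : ℝ → ℝ) (hφ : ∀ x, φ x = x - (1 - F x) / f x)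
    (hφC1 : ContDiffOn ℝ 1 φ (Set.Icc 0 1)) (hreg : MonotoneOn φ (Set.Icc 0 1))
    (ρ : ℝ) (hρ : ρ ∈ Set.Ioo (0:ℝ) 1) (hφρ : φ ρ = 0)
    (k : ℕ) (hk : k ≤ n + 1) :
    (∫⁻ b, ENNReal.ofReal (eagerRev b fun i => if (i : ℕ) < k then ρ else 0)
        ∂(Measure.pi fun _ : Fin (n + 1) =>
          volume.withDensity fun x => ENNReal.ofReal (f x))).toReal =
      (∫ x in ρ..1, φ x * ((n + 1 : ℝ) * F x ^ n * f x)) -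
        (if k < n + 1 then
          F ρ ^ (n + 1) * ∫ x in (0:ℝ)..ρ, (F x / F ρ) ^ (n + 1 - k) * deriv φ x
         else 0) :=
  eager_ab_testing_formula_general f hfc hfpos hfout F hF φ hφ hφC1 ρ hρ hφρ k hk
end
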